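/- arXiv:1212.3964 — 7 statements merged into one kernel-verified Lean document; each statement's English description precedes it below -/
import Mathlib

section
/- Let k ≥ 1 be an integer and s > 1 a real number, and let f(x) = (x^{1/k}·(x + (1-x)·(1 - 1/s)) + (1-x)·(1/s))^k be the BSBF iteration map. Then for every real x with 0 ≤ x < 1 one has f(x) > x, and f(1) = 1. -/
/-- **BSBF strict progress.** For the BSBF iteration map
`f x = (x^(1/k) * (x + (1-x)*(1 - 1/s)) + (1-x)*(1/s))^k` with `k ≥ 1` and `s > 1`,
for every `0 ≤ x < 1` one has `f x > x`, and `f 1 = 1`. -/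
theorem bsbf_strict_progress (k : ℕ) (hk : 1 ≤ k) (s : ℝ) (hs : 1 < s)
    (f : ℝ → ℝ)
    (hf : ∀ x : ℝ,
      f x = (x ^ ((1 : ℝ) / k) * (x + (1 - x) * (1 - 1 / s)) + (1 - x) * (1 / s)) ^ k) :
    (∀ x : ℝ, 0 ≤ x → x < 1 → f x > x) ∧ f 1 = 1 := by
  have hs0 : (0 : ℝ) < s := lt_trans one_pos hs
  constructor
  · intro x hx hx1
    rw [hf]
    set y := x ^ ((1 : ℝ) / k) with hy
    have hk0 : k ≠ 0 := by omega
    have hy0 : 0 ≤ y := Real.rpow_nonneg hx _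
    have hy1 : y < 1 := Real.rpow_lt_one hx hx1 (by positivity)
    have hyk : y ^ k = x := by
      rw [hy, one_div, Real.rpow_inv_natCast_pow hx hk0]
    have hid : y * (x + (1 - x) * (1 - 1 / s)) + (1 - x) * (1 / s)
        = y + (1 - x) * (1 - y) / s := by
      field_simp
      ring
    have hlt : y < y * (x + (1 - x) * (1 - 1 / s)) + (1 - x) * (1 / s) := by
      rw [hid]
      have : 0 < (1 - x) * (1 - y) / s := by
        apply div_pos (mul_pos (by linarith) (by linarith)) hs0
      linarith
    calc x = y ^ k := hyk.symm
      _ < _ := pow_lt_pow_left₀ hlt hy0 hk0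
  · rw [hf]
    simp [Real.one_rpow]
end

section
/- Let k ≥ 1 be an integer and s > 1 a real number, and let f(x) = (x^{1/k}·(x + (1-x)·(1 - 1/s)) + (1-x)·(1/s))^k be the BSBF iteration map. Then x = 1 is the unique fixed point of f in [0,1]: for every real x with 0 ≤ x ≤ 1, f(x) = x if and only if x = 1. -/
/-!
Substitute `x = t ^ k` with `t = x ^ (1/k) ∈ [0, 1]`. The base of `f x` then simplifies to
`t + (1 - x) * (1 - t) / s`, which exceeds `t` by a nonnegative gap. Since `u ↦ u ^ k` is
injective on `[0, ∞)`, `f x = t ^ k` exactly when the gap vanishes, i.e. when `t = 1`.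
-/

open Real

lemma add_pow_eq_pow_iff {R : Type*} [Semiring R] [LinearOrder R] [IsStrictOrderedRing R]
    {a b : R} {n : ℕ} (ha : 0 ≤ a) (hb : 0 ≤ b) (hn : n ≠ 0) :
    (a + b) ^ n = a ^ n ↔ b = 0 := by
  rw [pow_left_inj₀ (add_nonneg ha hb) ha hn, add_eq_left]

lemma one_sub_pow_mul_one_sub_eq_zero_iff {R : Type*} [Ring R] [LinearOrder R]
    [IsStrictOrderedRing R] {t : R} {n : ℕ} (ht : 0 ≤ t) (hn : n ≠ 0) :
    (1 - t ^ n) * (1 - t) = 0 ↔ t = 1 := by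
  rw [mul_eq_zero, sub_eq_zero, sub_eq_zero, eq_comm, pow_eq_one_iff_of_nonneg ht hn, eq_comm,
    or_self]

lemma bsbf_base_eq {K : Type*} [Field K] (s t x : K) (hs : s ≠ 0) :
    t * (x + (1 - x) * (1 - 1 / s)) + (1 - x) * (1 / s) = t + (1 - x) * (1 - t) / s := by
  field_simp
  ring

/-- **BSBF unique fixed point.** For the BSBF iteration map
`f x = (x^(1/k) * (x + (1-x)*(1 - 1/s)) + (1-x)*(1/s))^k` with `k ≥ 1` and `s > 1`,
`x = 1` is the unique fixed point of `f` in `[0,1]`. -/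
theorem bsbf_unique_fixed_point (k : ℕ) (hk : 1 ≤ k) (s : ℝ) (hs : 1 < s)
    (f : ℝ → ℝ)
    (hf : ∀ x : ℝ,
      f x = (x ^ ((1 : ℝ) / k) * (x + (1 - x) * (1 - 1 / s)) + (1 - x) * (1 / s)) ^ k) :
    ∀ x : ℝ, 0 ≤ x → x ≤ 1 → (f x = x ↔ x = 1) := by
  intro x hx0 hx1
  have hk0 : k ≠ 0 := by omega
  have hs0 : 0 < s := by linarith
  obtain ⟨t, ht0, ht1, rfl⟩ : ∃ t, 0 ≤ t ∧ t ≤ 1 ∧ t ^ k = x :=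
    ⟨x ^ ((k : ℝ)⁻¹), rpow_nonneg hx0 _, rpow_le_one hx0 hx1 (by positivity),
      rpow_inv_natCast_pow hx0 hk0⟩
  have hgap : 0 ≤ (1 - t ^ k) * (1 - t) / s :=
    div_nonneg (mul_nonneg (sub_nonneg.2 (pow_le_one₀ ht0 ht1)) (sub_nonneg.2 ht1)) hs0.le
  rw [hf, one_div (k : ℝ), pow_rpow_inv_natCast ht0 hk0, bsbf_base_eq _ _ _ hs0.ne',
    add_pow_eq_pow_iff ht0 hgap hk0, div_eq_zero_iff, or_iff_left hs0.ne',
    one_sub_pow_mul_one_sub_eq_zero_iff ht0 hk0, pow_eq_one_iff_of_nonneg ht0 hk0]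
end

section
/- Let k ≥ 1 be an integer and s > 1 a real number, and let f(x) = (x^{1/k}·(x + (1-x)·(1 - 1/s)) + (1-x)·(1/s))^k be the BSBF iteration map. Let X : ℕ → ℝ satisfy 0 ≤ X 0 ≤ 1 and X (n+1) = f(X n) for all n. Then the sequence X is monotonically nondecreasing and converges to 1 (i.e., X n → 1 as n → ∞). -/
open Filter Topology Set

/-! Writing `t = x ^ (1/k)`, the base of the BSBF map is `t + (1 - x) * (1 - t) / s`, which lies
between `t` and `1` on `[0, 1]`. Hence `x = t ^ k ≤ f x ≤ 1`, with equality `f x = x` only at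
`x = 1`. The orbit is therefore nondecreasing and bounded, and its limit is a fixed point of the
continuous map `f`, i.e. `1`. -/

theorem monotone_tendsto_of_self_le_map {f : ℝ → ℝ} {a b : ℝ} {X : ℕ → ℝ}
    (hmaps : MapsTo f (Icc a b) (Icc a b)) (hle : ∀ x ∈ Icc a b, x ≤ f x)
    (hcont : ContinuousOn f (Icc a b)) (hfix : ∀ x ∈ Icc a b, f x = x → x = b)
    (hX0 : X 0 ∈ Icc a b) (hrec : ∀ n, X (n + 1) = f (X n)) :
    Monotone X ∧ Tendsto X atTop (𝓝 b) := by
  have hmem : ∀ n, X n ∈ Icc a b := fun n => by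
    induction n with
    | zero => exact hX0
    | succ n ih => exact hrec n ▸ hmaps ih
  have hmono : Monotone X := monotone_nat_of_le_succ fun n => hrec n ▸ hle _ (hmem n)
  have hlim : Tendsto X atTop (𝓝 (⨆ n, X n)) :=
    tendsto_atTop_ciSup hmono ⟨b, forall_mem_range.2 fun n => (hmem n).2⟩
  have hL : ⨆ n, X n ∈ Icc a b := isClosed_Icc.mem_of_tendsto hlim (Eventually.of_forall hmem)
  have hfL : f (⨆ n, X n) = ⨆ n, X n := by
    have hlim' : Tendsto X atTop (𝓝[Icc a b] (⨆ n, X n)) :=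
      tendsto_nhdsWithin_iff.2 ⟨hlim, Eventually.of_forall hmem⟩
    have hshift : Tendsto (fun n => f (X n)) atTop (𝓝 (⨆ n, X n)) := by
      simpa only [Function.comp_def, ← hrec] using hlim.comp (tendsto_add_atTop_nat 1)
    exact tendsto_nhds_unique ((hcont _ hL).tendsto.comp hlim') hshift
  exact ⟨hmono, hfix _ hL hfL ▸ hlim⟩

noncomputable def bsbfMap (k : ℕ) (s x : ℝ) : ℝ :=
  (x ^ ((1 : ℝ) / k) * (x + (1 - x) * (1 - 1 / s)) + (1 - x) * (1 / s)) ^ k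

namespace bsbfMap

variable {k : ℕ} {s x : ℝ}

theorem eq_pow_root_add (k : ℕ) (s x : ℝ) :
    bsbfMap k s x = (x ^ ((1 : ℝ) / k) + (1 - x) * (1 - x ^ ((1 : ℝ) / k)) / s) ^ k := by
  rw [bsbfMap]
  ring

theorem continuous (k : ℕ) (s : ℝ) : Continuous (bsbfMap k s) := by
  unfold bsbfMap
  have := Real.continuous_rpow_const (q := (1 : ℝ) / k) (by positivity)
  fun_prop

section UnitInterval

variable (hx : x ∈ Icc (0 : ℝ) 1)
include hx

theorem root_mem_Icc : x ^ ((1 : ℝ) / k) ∈ Icc (0 : ℝ) 1 :=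
  ⟨Real.rpow_nonneg hx.1 _, Real.rpow_le_one hx.1 hx.2 (by positivity)⟩

theorem gap_nonneg (hs : 0 ≤ s) : 0 ≤ (1 - x) * (1 - x ^ ((1 : ℝ) / k)) / s :=
  div_nonneg (mul_nonneg (sub_nonneg.2 hx.2) (sub_nonneg.2 (root_mem_Icc hx).2)) hs

theorem le_one (hs : 1 ≤ s) : bsbfMap k s x ≤ 1 := by
  obtain ⟨ht0, ht1⟩ := root_mem_Icc (k := k) hx
  have hgap : (1 - x) * (1 - x ^ ((1 : ℝ) / k)) / s ≤ 1 - x ^ ((1 : ℝ) / k) :=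
    (div_le_self (mul_nonneg (sub_nonneg.2 hx.2) (sub_nonneg.2 ht1)) hs).trans
      (mul_le_of_le_one_left (sub_nonneg.2 ht1) (by linarith [hx.1]))
  rw [eq_pow_root_add]
  exact pow_le_one₀ (add_nonneg ht0 (gap_nonneg hx (zero_le_one.trans hs))) (by linarith)

variable (hk : k ≠ 0)
include hk

theorem root_pow : (x ^ ((1 : ℝ) / k)) ^ k = x := by
  rw [one_div, Real.rpow_inv_natCast_pow hx.1 hk]

theorem le_self (hs : 0 ≤ s) : x ≤ bsbfMap k s x :=
  calc x = (x ^ ((1 : ℝ) / k)) ^ k := (root_pow hx hk).symm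
    _ ≤ bsbfMap k s x :=
      eq_pow_root_add k s x ▸ pow_le_pow_left₀ (root_mem_Icc hx).1
        (le_add_of_nonneg_right (gap_nonneg hx hs)) k

theorem eq_one_of_eq_self (hs : 0 < s) (hfix : bsbfMap k s x = x) : x = 1 := by
  obtain ⟨ht0, -⟩ := root_mem_Icc (k := k) hx
  have hbase : x ^ ((1 : ℝ) / k) + (1 - x) * (1 - x ^ ((1 : ℝ) / k)) / s = x ^ ((1 : ℝ) / k) := by
    rw [← pow_left_inj₀ (add_nonneg ht0 (gap_nonneg hx hs.le)) ht0 hk, root_pow hx hk]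
    rw [← eq_pow_root_add, hfix]
  have hprod : (1 - x) * (1 - x ^ ((1 : ℝ) / k)) = 0 := by
    simpa [hs.ne'] using hbase
  rcases mul_eq_zero.1 hprod with h | h
  · linarith
  · rw [← root_pow hx hk, ← sub_eq_zero.1 h, one_pow]

end UnitInterval

theorem mapsTo_Icc (hk : k ≠ 0) (hs : 1 ≤ s) : MapsTo (bsbfMap k s) (Icc 0 1) (Icc 0 1) :=
  fun _ hx => ⟨hx.1.trans (le_self hx hk (zero_le_one.trans hs)), le_one hx hs⟩

end bsbfMap

/-- **BSBF convergence.** For the BSBF iteration map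
`f x = (x^(1/k) * (x + (1-x)*(1 - 1/s)) + (1-x)*(1/s))^k` with `k ≥ 1` and `s > 1`,
any sequence `X` with `0 ≤ X 0 ≤ 1` and `X (n+1) = f (X n)` is monotonically
nondecreasing and converges to `1`. -/
theorem bsbf_monotone_tendsto_one (k : ℕ) (hk : 1 ≤ k) (s : ℝ) (hs : 1 < s)
    (f : ℝ → ℝ)
    (hf : ∀ x : ℝ,
      f x = (x ^ ((1 : ℝ) / k) * (x + (1 - x) * (1 - 1 / s)) + (1 - x) * (1 / s)) ^ k)
    (X : ℕ → ℝ) (hX0 : 0 ≤ X 0) (hX1 : X 0 ≤ 1)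
    (hrec : ∀ n : ℕ, X (n + 1) = f (X n)) :
    Monotone X ∧ Filter.Tendsto X Filter.atTop (nhds 1) := by
  have hk0 : k ≠ 0 := Nat.one_le_iff_ne_zero.1 hk
  have hs0 : 0 < s := zero_lt_one.trans hs
  obtain rfl : f = bsbfMap k s := funext hf
  exact monotone_tendsto_of_self_le_map (bsbfMap.mapsTo_Icc hk0 hs.le)
    (fun _ hx => bsbfMap.le_self hx hk0 hs0.le) (bsbfMap.continuous k s).continuousOn
    (fun _ hx => bsbfMap.eq_one_of_eq_self hx hk0 hs0) ⟨hX0, hX1⟩ hrec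
end

section
/- Let k ≥ 1 be an integer and s > 1 a real number, and let g(x) = (x^{1/k}·(x + (1-x)·(1 - 1/(k·s))) + (1-x)·(1/s))^k be the BSBFSD iteration map. Then for every real x with 0 ≤ x < 1 one has g(x) > x, and g(1) = 1. -/
/-- **BSBFSD strict progress.** For the BSBFSD iteration map
`g x = (x^(1/k) * (x + (1-x)*(1 - 1/(k·s))) + (1-x)*(1/s))^k` with `k ≥ 1` and `s > 1`,
for every `0 ≤ x < 1` one has `g x > x`, and `g 1 = 1`. -/
theorem bsbfsd_strict_progress (k : ℕ) (hk : 1 ≤ k) (s : ℝ) (hs : 1 < s)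
    (g : ℝ → ℝ)
    (hg : ∀ x : ℝ,
      g x = (x ^ ((1 : ℝ) / k) * (x + (1 - x) * (1 - 1 / ((k : ℝ) * s)))
        + (1 - x) * (1 / s)) ^ k) :
    (∀ x : ℝ, 0 ≤ x → x < 1 → g x > x) ∧ g 1 = 1 := by
  have hk0 : (0 : ℝ) < (k : ℝ) := by exact_mod_cast hk
  have hkR : (1 : ℝ) ≤ (k : ℝ) := by exact_mod_cast hk
  have hs0 : (0 : ℝ) < s := lt_trans one_pos hs
  constructor
  · intro x hx hx1
    rw [hg]
    set y := x ^ ((1 : ℝ) / k) with hy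
    have hy0 : 0 ≤ y := Real.rpow_nonneg hx _
    have hy1 : y < 1 := by
      rw [hy]
      exact Real.rpow_lt_one hx hx1 (by positivity)
    have hyk : y ^ k = x := by
      rw [hy, ← Real.rpow_natCast (x ^ ((1 : ℝ) / k)) k, ← Real.rpow_mul hx]
      rw [one_div, inv_mul_cancel₀ (ne_of_gt hk0), Real.rpow_one]
    have key : y < y * (x + (1 - x) * (1 - 1 / ((k : ℝ) * s))) + (1 - x) * (1 / s) := by
      have hdiff : y * (x + (1 - x) * (1 - 1 / ((k : ℝ) * s))) + (1 - x) * (1 / s) - y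
          = (1 - x) * (1 / s) * (1 - y / k) := by
        field_simp
        ring
      have hpos : 0 < (1 - x) * (1 / s) * (1 - y / k) := by
        have : y / k < 1 := by
          calc y / k ≤ y / 1 := by
                apply div_le_div_of_nonneg_left hy0 one_pos hkR
            _ = y := div_one y
            _ < 1 := hy1
        have h1 : 0 < 1 - x := by linarith
        have h2 : 0 < 1 - y / k := by linarith
        positivity
      linarith [hdiff, hpos]
    calc x = y ^ k := hyk.symm
      _ < (y * (x + (1 - x) * (1 - 1 / ((k : ℝ) * s))) + (1 - x) * (1 / s)) ^ k :=
          pow_lt_pow_left₀ key hy0 (by omega)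
  · rw [hg]
    simp
end

section
/- Let k ≥ 1 and m ≥ 1 be integers, and let h_m(x) = (x^{1/k}·(x + (1-x)·(1 - 1/m)) + (1-x)·(1/m))^k be the RSBF reservoir-phase iteration map at stream position m. Then for every real x with 0 ≤ x < 1 one has h_m(x) > x, and h_m(1) = 1. -/
/-- **RSBF reservoir-phase strict progress.** For the RSBF reservoir-phase iteration map
`h_m x = (x^(1/k) * (x + (1-x)*(1 - 1/m)) + (1-x)*(1/m))^k` with integers `k ≥ 1` and
`m ≥ 1`, for every `0 ≤ x < 1` one has `h_m x > x`, and `h_m 1 = 1`. -/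
theorem rsbf_strict_progress (k : ℕ) (hk : 1 ≤ k) (m : ℕ) (hm : 1 ≤ m)
    (h : ℝ → ℝ)
    (hh : ∀ x : ℝ,
      h x = (x ^ ((1 : ℝ) / k) * (x + (1 - x) * (1 - 1 / (m : ℝ)))
        + (1 - x) * (1 / (m : ℝ))) ^ k) :
    (∀ x : ℝ, 0 ≤ x → x < 1 → h x > x) ∧ h 1 = 1 := by
  have hkR : (0:ℝ) < (k:ℝ) := by exact_mod_cast hk
  have hmR : (0:ℝ) < (m:ℝ) := by exact_mod_cast hm
  constructor
  · intro x hx hx1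
    rw [hh]
    set y := x ^ ((1:ℝ)/k) with hy
    have hy0 : 0 ≤ y := Real.rpow_nonneg hx _
    have hy1 : y < 1 := Real.rpow_lt_one hx hx1 (by positivity)
    have hxeq : y ^ k = x := by
      rw [hy, ← Real.rpow_natCast (x ^ ((1:ℝ)/k)) k, ← Real.rpow_mul hx,
        one_div_mul_cancel (ne_of_gt hkR), Real.rpow_one]
    have hineq : y < y * (x + (1 - x) * (1 - 1 / (m:ℝ))) + (1 - x) * (1 / (m:ℝ)) := by
      have h1 : 0 < (1 - x) * (1/(m:ℝ)) * (1 - y) := by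
        have : 0 < 1 - x := by linarith
        have : 0 < 1 - y := by linarith
        positivity
      nlinarith
    calc x = y ^ k := hxeq.symm
      _ < _ := pow_lt_pow_left₀ hineq hy0 (by omega)
  · rw [hh]
    simp [Real.one_rpow]
end

section
/- Let k ≥ 1 be an integer, s > 1 a real number, and p ≥ 1 an integer (the stream position after which the threshold probability p* takes effect). Define the two-phase RSBF process: let X : ℕ → ℝ satisfy 0 ≤ X 1 ≤ 1, X (m+1) = (X m^{1/k}·(X m + (1 - X m)·(1 - 1/m)) + (1 - X m)·(1/m))^k for all integers m with 1 ≤ m ≤ p, and X (m+1) = (X m^{1/k}·(X m + (1 - X m)·(1 - 1/s)) + (1 - X m)·(1/s))^k for all integers m > p. Then the sequence X is monotonically nondecreasing and converges to 1 (i.e., X m → 1 as m → ∞). -/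
/-!
Writing `y = x ^ (1/k)`, one step of the recurrence is `x ↦ (y + a (1 - x) (1 - y)) ^ k`.
For `x ∈ [0, 1]` the base lies in `[y, 1]`, so the step maps `[0, 1]` into itself and never
decreases `x = y ^ k`. Hence `X` is nondecreasing and bounded, and its limit is a fixed point of
the continuous second-phase step with `a = 1/s > 0`; the only such point in `[0, 1]` is `1`,
because a fixed point forces `a (1 - x) (1 - y) = 0`.
-/

open Filter Topology Set

theorem isFixedPt_of_tendsto_of_eventually_succ_eq {α : Type*} [TopologicalSpace α] [T2Space α]
    {f : α → α} {u : ℕ → α} {L : α} (hf : ContinuousAt f L) (hu : Tendsto u atTop (𝓝 L))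
    (hrec : ∀ᶠ n in atTop, u (n + 1) = f (u n)) : f L = L :=
  tendsto_nhds_unique ((hf.tendsto.comp hu).congr' (hrec.mono fun _ h => h.symm))
    ((tendsto_add_atTop_iff_nat 1).mpr hu)

noncomputable def rsbfStep (k : ℕ) (a x : ℝ) : ℝ :=
  (x ^ ((1 : ℝ) / k) * (x + (1 - x) * (1 - a)) + (1 - x) * a) ^ k

section rsbfStep

variable {k : ℕ} {a x : ℝ}

theorem rsbfStep_eq (k : ℕ) (a x : ℝ) :
    rsbfStep k a x = (x ^ ((1 : ℝ) / k) + a * (1 - x) * (1 - x ^ ((1 : ℝ) / k))) ^ k := by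
  unfold rsbfStep
  ring_nf

theorem rpow_one_div_mem_Icc (hx : x ∈ Icc (0 : ℝ) 1) : x ^ ((1 : ℝ) / k) ∈ Icc (0 : ℝ) 1 :=
  ⟨Real.rpow_nonneg hx.1 _, Real.rpow_le_one hx.1 hx.2 (by positivity)⟩

theorem rpow_one_div_pow (hk : k ≠ 0) (hx : 0 ≤ x) : (x ^ ((1 : ℝ) / k)) ^ k = x := by
  rw [one_div]
  exact Real.rpow_inv_natCast_pow hx hk

theorem le_rsbfStep (hk : k ≠ 0) (ha : 0 ≤ a) (hx : x ∈ Icc (0 : ℝ) 1) : x ≤ rsbfStep k a x := by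
  obtain ⟨hy0, hy1⟩ := rpow_one_div_mem_Icc (k := k) hx
  rw [rsbfStep_eq]
  calc x = (x ^ ((1 : ℝ) / k)) ^ k := (rpow_one_div_pow hk hx.1).symm
    _ ≤ _ := by
      gcongr
      refine le_add_of_nonneg_right (mul_nonneg (mul_nonneg ha ?_) ?_) <;> linarith [hx.2]

theorem rsbfStep_le_one (ha : a ∈ Icc (0 : ℝ) 1) (hx : x ∈ Icc (0 : ℝ) 1) :
    rsbfStep k a x ≤ 1 := by
  obtain ⟨hy0, hy1⟩ := rpow_one_div_mem_Icc (k := k) hx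
  have hax : a * (1 - x) ≤ 1 := mul_le_one₀ ha.2 (by linarith [hx.2]) (by linarith [hx.1])
  rw [rsbfStep_eq]
  apply pow_le_one₀
  · exact add_nonneg hy0 (mul_nonneg (mul_nonneg ha.1 (by linarith [hx.2])) (by linarith))
  · nlinarith

theorem rsbfStep_mem_Icc (hk : k ≠ 0) (ha : a ∈ Icc (0 : ℝ) 1) (hx : x ∈ Icc (0 : ℝ) 1) :
    rsbfStep k a x ∈ Icc (0 : ℝ) 1 :=
  ⟨hx.1.trans (le_rsbfStep hk ha.1 hx), rsbfStep_le_one ha hx⟩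

theorem eq_one_of_rsbfStep_eq_self (hk : k ≠ 0) (ha : 0 < a) (hx : x ∈ Icc (0 : ℝ) 1)
    (hfix : rsbfStep k a x = x) : x = 1 := by
  set y := x ^ ((1 : ℝ) / k) with hy
  obtain ⟨hy0, hy1⟩ := rpow_one_div_mem_Icc (k := k) hx
  have hyk : y ^ k = x := rpow_one_div_pow hk hx.1
  have hgap : 0 ≤ a * (1 - x) * (1 - y) :=
    mul_nonneg (mul_nonneg ha.le (by linarith [hx.2])) (by linarith)
  have hbase : y + a * (1 - x) * (1 - y) = y := by
    rw [rsbfStep_eq, ← hy] at hfix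
    exact (pow_left_inj₀ (by linarith) hy0 hk).mp (hfix.trans hyk.symm)
  rcases mul_eq_zero.mp (add_eq_left.mp hbase) with h | h
  · rcases mul_eq_zero.mp h with h | h
    · exact absurd h ha.ne'
    · linarith
  · rw [← hyk, show y = 1 by linarith, one_pow]

theorem continuous_rsbfStep (k : ℕ) (a : ℝ) : Continuous (rsbfStep k a) := by
  have : Continuous fun x : ℝ => x ^ ((1 : ℝ) / k) := Real.continuous_rpow_const (by positivity)
  unfold rsbfStep
  fun_prop

theorem tendsto_one_of_monotone_of_eventually_rsbfStep (hk : k ≠ 0) (ha : 0 < a) {u : ℕ → ℝ}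
    (hmono : Monotone u) (hbound : ∀ n, u n ∈ Icc (0 : ℝ) 1)
    (hrec : ∀ᶠ n in atTop, u (n + 1) = rsbfStep k a (u n)) : Tendsto u atTop (𝓝 1) := by
  have hbdd : BddAbove (range u) := ⟨1, by rintro _ ⟨n, rfl⟩; exact (hbound n).2⟩
  have hlim := tendsto_atTop_ciSup hmono hbdd
  have hmem : ⨆ n, u n ∈ Icc (0 : ℝ) 1 :=
    isClosed_Icc.mem_of_tendsto hlim (Eventually.of_forall hbound)
  have hfix := isFixedPt_of_tendsto_of_eventually_succ_eq
    (continuous_rsbfStep k a).continuousAt hlim hrec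
  rwa [← eq_one_of_rsbfStep_eq_self hk ha hmem hfix]

end rsbfStep

theorem rsbf_two_phase_monotone_tendsto_one_general (k : ℕ) (hk : 1 ≤ k) (s : ℝ) (hs : 1 < s)
    (p : ℕ) (X : ℕ → ℝ) (hX0 : 0 ≤ X 1) (hX1 : X 1 ≤ 1)
    (hrec1 : ∀ m : ℕ, 1 ≤ m → m ≤ p →
      X (m + 1) = ((X m) ^ ((1 : ℝ) / k) * (X m + (1 - X m) * (1 - 1 / (m : ℝ)))
        + (1 - X m) * (1 / (m : ℝ))) ^ k)
    (hrec2 : ∀ m : ℕ, p < m →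
      X (m + 1) = ((X m) ^ ((1 : ℝ) / k) * (X m + (1 - X m) * (1 - 1 / s))
        + (1 - X m) * (1 / s)) ^ k) :
    (∀ m : ℕ, 1 ≤ m → X m ≤ X (m + 1)) ∧
    Filter.Tendsto X Filter.atTop (nhds 1) := by
  have hk0 : k ≠ 0 := by omega
  have hs' : 1 / s ∈ Icc (0 : ℝ) 1 := ⟨by positivity, (div_le_one (by linarith)).mpr hs.le⟩
  have hstep : ∀ m, 1 ≤ m → ∃ a ∈ Icc (0 : ℝ) 1, X (m + 1) = rsbfStep k a (X m) := by
    intro m hm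
    rcases le_or_gt m p with hmp | hmp
    · refine ⟨1 / m, ⟨by positivity, ?_⟩, hrec1 m hm hmp⟩
      exact (div_le_one (by positivity)).mpr (by exact_mod_cast hm)
    · exact ⟨1 / s, hs', hrec2 m hmp⟩
  have hbound : ∀ m, 1 ≤ m → X m ∈ Icc (0 : ℝ) 1 := by
    intro m hm
    induction m, hm using Nat.le_induction with
    | base => exact ⟨hX0, hX1⟩
    | succ m hm ih =>
      obtain ⟨a, ha, hX⟩ := hstep m hm
      exact hX ▸ rsbfStep_mem_Icc hk0 ha ih
  have hmono : ∀ m, 1 ≤ m → X m ≤ X (m + 1) := fun m hm => by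
    obtain ⟨a, ha, hX⟩ := hstep m hm
    exact hX ▸ le_rsbfStep hk0 ha.1 (hbound m hm)
  refine ⟨hmono, (tendsto_add_atTop_iff_nat 1).mp ?_⟩
  refine tendsto_one_of_monotone_of_eventually_rsbfStep hk0 (a := 1 / s) (by positivity)
    (monotone_nat_of_le_succ fun n => hmono (n + 1) (by omega))
    (fun n => hbound (n + 1) (by omega)) ?_
  filter_upwards [eventually_ge_atTop p] with n hn
  exact hrec2 (n + 1) (by omega)

/-- **RSBF two-phase convergence.** Let `k ≥ 1` be an integer, `s > 1` a real, and
`p ≥ 1` an integer (the stream position after which the threshold `p*` takes effect).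
If `X : ℕ → ℝ` satisfies `0 ≤ X 1 ≤ 1`,
`X (m+1) = (X m^(1/k)·(X m + (1 - X m)·(1 - 1/m)) + (1 - X m)·(1/m))^k` for `1 ≤ m ≤ p`
and `X (m+1) = (X m^(1/k)·(X m + (1 - X m)·(1 - 1/s)) + (1 - X m)·(1/s))^k` for `m > p`,
then `X` is monotonically nondecreasing (from index 1 on, where it is defined by the
recurrence) and converges to `1`. -/
theorem rsbf_two_phase_monotone_tendsto_one (k : ℕ) (hk : 1 ≤ k) (s : ℝ) (hs : 1 < s)
    (p : ℕ) (hp : 1 ≤ p) (X : ℕ → ℝ) (hX0 : 0 ≤ X 1) (hX1 : X 1 ≤ 1)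
    (hrec1 : ∀ m : ℕ, 1 ≤ m → m ≤ p →
      X (m + 1) = ((X m) ^ ((1 : ℝ) / k) * (X m + (1 - X m) * (1 - 1 / (m : ℝ)))
        + (1 - X m) * (1 / (m : ℝ))) ^ k)
    (hrec2 : ∀ m : ℕ, p < m →
      X (m + 1) = ((X m) ^ ((1 : ℝ) / k) * (X m + (1 - X m) * (1 - 1 / s))
        + (1 - X m) * (1 / s)) ^ k) :
    (∀ m : ℕ, 1 ≤ m → X m ≤ X (m + 1)) ∧
    Filter.Tendsto X Filter.atTop (nhds 1) :=
  rsbf_two_phase_monotone_tendsto_one_general k hk s hs p X hX0 hX1 hrec1 hrec2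
end

section
/- Let k ≥ 1 be an integer, s > 1 a real number, and L a real number with 0 ≤ L ≤ s, and let r(x) = (x^{1/k}·(x + (1-x)·(1 - L/s²)) + (1-x)·(1/s))^k be the RLBSBF iteration map with load L. Then for every real x with 0 ≤ x < 1 one has r(x) > x, and r(1) = 1. -/
/-!
Write `y = x^(1/k)`, so that `x = y^k` and `0 ≤ y < 1`. The base of the `k`-th power in `r x`
exceeds `y` by `(1 - x) (s - y L) / s²`, which is positive because `s - y L = y (s - L) + (1 - y) s`.
Raising `y < base` to the `k`-th power gives `x < r x`.
-/

namespace RLBSBF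

lemma base_sub_eq (x y s L : ℝ) (hs : s ≠ 0) :
    y * (x + (1 - x) * (1 - L / s ^ 2)) + (1 - x) * (1 / s) - y
      = (1 - x) * (s - y * L) / s ^ 2 := by
  field_simp
  ring

lemma mul_lt_of_lt_one_of_le {y s L : ℝ} (hy0 : 0 ≤ y) (hy1 : y < 1) (hs : 0 < s)
    (hLs : L ≤ s) : y * L < s := by
  nlinarith [mul_nonneg hy0 (sub_nonneg.2 hLs), mul_pos (sub_pos.2 hy1) hs]

lemma lt_base {x y s L : ℝ} (hx1 : x < 1) (hy0 : 0 ≤ y) (hy1 : y < 1) (hs : 0 < s)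
    (hLs : L ≤ s) :
    y < y * (x + (1 - x) * (1 - L / s ^ 2)) + (1 - x) * (1 / s) := by
  have hgap : 0 < (1 - x) * (s - y * L) / s ^ 2 := by
    have := mul_lt_of_lt_one_of_le hy0 hy1 hs hLs
    have : 0 < 1 - x := sub_pos.2 hx1
    positivity
  rw [← base_sub_eq x y s L hs.ne'] at hgap
  linarith

end RLBSBF

theorem rlbsbf_strict_progress_general (k : ℕ) (hk : 1 ≤ k) (s : ℝ) (hs : 1 < s)
    (L : ℝ) (hLs : L ≤ s)
    (r : ℝ → ℝ)
    (hr : ∀ x : ℝ,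
      r x = (x ^ ((1 : ℝ) / k) * (x + (1 - x) * (1 - L / s ^ 2))
        + (1 - x) * (1 / s)) ^ k) :
    (∀ x : ℝ, 0 ≤ x → x < 1 → r x > x) ∧ r 1 = 1 := by
  have hk0 : k ≠ 0 := by omega
  refine ⟨fun x hx0 hx1 => ?_, by simp [hr]⟩
  have hy0 : 0 ≤ x ^ ((1 : ℝ) / k) := Real.rpow_nonneg hx0 _
  have hy1 : x ^ ((1 : ℝ) / k) < 1 := Real.rpow_lt_one hx0 hx1 (by positivity)
  have hyk : (x ^ ((1 : ℝ) / k)) ^ k = x := by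
    rw [one_div, Real.rpow_inv_natCast_pow hx0 hk0]
  calc x = (x ^ ((1 : ℝ) / k)) ^ k := hyk.symm
    _ < _ := pow_lt_pow_left₀ (RLBSBF.lt_base hx1 hy0 hy1 (by linarith) hLs) hy0 hk0
    _ = r x := (hr x).symm

/-- **RLBSBF strict progress.** For the RLBSBF iteration map with load `L`,
`r x = (x^(1/k) * (x + (1-x)*(1 - L/s²)) + (1-x)*(1/s))^k`, where `k ≥ 1`, `s > 1`
and `0 ≤ L ≤ s`, for every `0 ≤ x < 1` one has `r x > x`, and `r 1 = 1`. -/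
theorem rlbsbf_strict_progress (k : ℕ) (hk : 1 ≤ k) (s : ℝ) (hs : 1 < s)
    (L : ℝ) (hL0 : 0 ≤ L) (hLs : L ≤ s)
    (r : ℝ → ℝ)
    (hr : ∀ x : ℝ,
      r x = (x ^ ((1 : ℝ) / k) * (x + (1 - x) * (1 - L / s ^ 2))
        + (1 - x) * (1 / s)) ^ k) :
    (∀ x : ℝ, 0 ≤ x → x < 1 → r x > x) ∧ r 1 = 1 :=
  rlbsbf_strict_progress_general k hk s hs L hLs r hr
end
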